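/- Let m ≥ 1 be an integer, λ_B, λ_F > 0, and let G_B, G_F be independent Gamma random variables with shape m and rates λ_B, λ_F respectively, with CDF F_B of G_B. Let ε3 > 0, ε4 > 0 and ε5 = ε3 + ε4. Then P(G_B > ε5 and G_F < ε4·G_B/(G_B − ε3)) = 1 − F_B(ε5) − (λ_B^m/Γ(m)) · Σ_{i=0}^{m−1} ((λ_F ε4)^i / i!) · ∫_{ε5}^{∞} (y^{m+i−1}/(y − ε3)^i) · e^{−λ_B y − λ_F ε4 y/(y − ε3)} dy. -/

import Mathlib

open MeasureTheory ProbabilityTheory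

/-- The law of a Gamma random variable with integer shape `m` and rate `l`: the measure on ℝ
with density f(x) = l^m x^(m−1) e^(−lx)/Γ(m) for x > 0 (w.r.t. Lebesgue measure). -/
noncomputable def gammaLaw (m : ℕ) (l : ℝ) : Measure ℝ :=
  volume.withDensity fun x =>
    ENNReal.ofReal
      (if 0 < x then l ^ m * x ^ (m - 1) * Real.exp (-(l * x)) / Real.Gamma m else 0)

/-- The CDF F(x) = 1 − e^(−lx) Σ_{i=0}^{m−1} (lx)^i/i! of a Gamma random variable with integer
shape `m` and rate `l`. -/
noncomputable def gammaCDF (m : ℕ) (l x : ℝ) : ℝ :=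
  1 - Real.exp (-(l * x)) * ∑ i ∈ Finset.range m, (l * x) ^ i / (Nat.factorial i : ℝ)

/-!
Condition on `G_B = y`. For `y > ε5` the event asks `G_F < ε4 y / (y - ε3)`, a positive threshold,
so independence turns the probability into `∫_{ε5}^∞ f_B(y) F_F(ε4 y / (y - ε3)) dy`. For integer
shape, `1 - F(x)` is the Poisson sum `∑_{i<m} e^{-λx} (λx)^i / i!` (its derivative telescopes to
the density), so the integrand splits into `f_B`, whose integral is `1 - F_B(ε5)`, minus `m` terms,
each of them the explicit integrand of the formula.
-/

open Set Filter Topology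

-- `poissonPMFReal` with a real rather than `ℝ≥0` parameter.
noncomputable def poissonTerm (x : ℝ) (i : ℕ) : ℝ :=
  Real.exp (-x) * (x ^ i / (Nat.factorial i : ℝ))

lemma poissonTerm_nonneg {x : ℝ} (hx : 0 ≤ x) (i : ℕ) : 0 ≤ poissonTerm x i := by
  unfold poissonTerm
  positivity

lemma poissonTerm_le_one {x : ℝ} (hx : 0 ≤ x) (i : ℕ) : poissonTerm x i ≤ 1 :=
  calc poissonTerm x i ≤ Real.exp (-x) * Real.exp x :=
        mul_le_mul_of_nonneg_left (Real.pow_div_factorial_le_exp x hx i) (Real.exp_nonneg _)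
    _ = 1 := by rw [← Real.exp_add, neg_add_cancel, Real.exp_zero]

lemma hasDerivAt_poissonTerm_succ (i : ℕ) (x : ℝ) :
    HasDerivAt (poissonTerm · (i + 1)) (poissonTerm x i - poissonTerm x (i + 1)) x := by
  refine ((Real.hasDerivAt_exp (-x)).comp x (hasDerivAt_neg x)).mul
    (((hasDerivAt_pow (i + 1) x).div_const _)) |>.congr_deriv ?_
  simp only [poissonTerm, Function.comp_apply, Nat.factorial_succ, Nat.add_sub_cancel]
  push_cast
  field_simp
  ring

lemma tendsto_poissonTerm_atTop (i : ℕ) : Tendsto (poissonTerm · i) atTop (𝓝 0) := by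
  have h := (Real.tendsto_pow_mul_exp_neg_atTop_nhds_zero i).div_const (Nat.factorial i : ℝ)
  rw [zero_div] at h
  refine h.congr fun x => ?_
  rw [poissonTerm]
  ring

section GammaCDF

variable {m : ℕ} {l : ℝ}

lemma gammaCDF_eq_one_sub_sum_poissonTerm (m : ℕ) (l x : ℝ) :
    gammaCDF m l x = 1 - ∑ i ∈ Finset.range m, poissonTerm (l * x) i := by
  simp only [gammaCDF, poissonTerm, Finset.mul_sum]

lemma gammaCDF_succ (m : ℕ) (l x : ℝ) :
    gammaCDF (m + 1) l x = gammaCDF m l x - poissonTerm (l * x) m := by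
  rw [gammaCDF_eq_one_sub_sum_poissonTerm, gammaCDF_eq_one_sub_sum_poissonTerm,
    Finset.sum_range_succ]
  ring

lemma hasDerivAt_gammaCDF_succ (k : ℕ) (l t : ℝ) :
    HasDerivAt (gammaCDF (k + 1) l) (l * poissonTerm (l * t) k) t := by
  induction k with
  | zero =>
    have h : gammaCDF 1 l = fun t => 1 - Real.exp (-(l * t)) := by
      funext t
      simp [gammaCDF]
    rw [h]
    refine (((hasDerivAt_id t).const_mul l).neg.exp.const_sub 1).congr_deriv ?_
    simp [poissonTerm, mul_comm]
  | succ k ih =>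
    have hterm := (hasDerivAt_poissonTerm_succ k (l * t)).comp t ((hasDerivAt_id t).const_mul l)
    rw [funext (gammaCDF_succ (k + 1) l)]
    refine (ih.sub hterm).congr_deriv ?_
    ring

lemma hasDerivAt_gammaCDF (hm : 1 ≤ m) (l t : ℝ) :
    HasDerivAt (gammaCDF m l) (l ^ m * t ^ (m - 1) * Real.exp (-(l * t)) / Real.Gamma m) t := by
  obtain ⟨k, rfl⟩ := Nat.exists_eq_add_of_le' hm
  refine (hasDerivAt_gammaCDF_succ k l t).congr_deriv ?_
  rw [Nat.add_sub_cancel, Nat.cast_add_one, Real.Gamma_nat_eq_factorial, poissonTerm]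
  ring

lemma tendsto_gammaCDF_atTop (m : ℕ) (hl : 0 < l) : Tendsto (gammaCDF m l) atTop (𝓝 1) := by
  have hlin : Tendsto (l * ·) atTop atTop := tendsto_id.const_mul_atTop hl
  have h := (tendsto_finsetSum (Finset.range m) fun i _ =>
    (tendsto_poissonTerm_atTop i).comp hlin).const_sub 1
  rw [Finset.sum_const_zero, sub_zero] at h
  exact h.congr fun t => (gammaCDF_eq_one_sub_sum_poissonTerm m l t).symm

lemma gammaCDF_zero (hm : 1 ≤ m) (l : ℝ) : gammaCDF m l 0 = 0 := by
  obtain ⟨k, rfl⟩ := Nat.exists_eq_add_of_le' hm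
  simp [gammaCDF, Finset.sum_range_succ']

@[fun_prop]
lemma measurable_gammaCDF (m : ℕ) (l : ℝ) : Measurable (gammaCDF m l) := by
  unfold gammaCDF
  fun_prop

lemma gammaCDF_nonneg (m : ℕ) {l t : ℝ} (h : 0 ≤ l * t) : 0 ≤ gammaCDF m l t := by
  have := Real.sum_le_exp_of_nonneg h m
  rw [gammaCDF, sub_nonneg]
  calc _ ≤ Real.exp (-(l * t)) * Real.exp (l * t) := by gcongr
    _ = 1 := by rw [← Real.exp_add, neg_add_cancel, Real.exp_zero]

lemma gammaCDF_le_one (m : ℕ) {l t : ℝ} (h : 0 ≤ l * t) : gammaCDF m l t ≤ 1 := by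
  rw [gammaCDF_eq_one_sub_sum_poissonTerm, sub_le_self_iff]
  exact Finset.sum_nonneg fun i _ => poissonTerm_nonneg h i

end GammaCDF

noncomputable def gammaDensity (m : ℕ) (l x : ℝ) : ℝ :=
  if 0 < x then l ^ m * x ^ (m - 1) * Real.exp (-(l * x)) / Real.Gamma m else 0

section GammaLaw

variable {m : ℕ} {l : ℝ}

lemma gammaLaw_eq_withDensity (m : ℕ) (l : ℝ) :
    gammaLaw m l = volume.withDensity fun x => ENNReal.ofReal (gammaDensity m l x) := rfl

lemma gammaDensity_of_pos {x : ℝ} (hx : 0 < x) :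
    gammaDensity m l x = l ^ m * x ^ (m - 1) * Real.exp (-(l * x)) / Real.Gamma m :=
  if_pos hx

lemma gammaDensity_nonneg (hl : 0 ≤ l) (x : ℝ) : 0 ≤ gammaDensity m l x := by
  unfold gammaDensity
  split_ifs <;> positivity

@[fun_prop]
lemma measurable_gammaDensity (m : ℕ) (l : ℝ) : Measurable (gammaDensity m l) :=
  Measurable.ite measurableSet_Ioi (by fun_prop) measurable_const

lemma integrableOn_gammaDensity_Ioi (hm : 1 ≤ m) (hl : 0 < l) {a : ℝ} (ha : 0 ≤ a) :
    IntegrableOn (gammaDensity m l) (Ioi a) := by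
  refine (integrableOn_Ioi_deriv_of_nonneg' (fun x _ => hasDerivAt_gammaCDF hm l x)
    (fun x hx => ?_) (tendsto_gammaCDF_atTop m hl)).congr_fun
    (fun x hx => (gammaDensity_of_pos (ha.trans_lt hx)).symm) measurableSet_Ioi
  have : 0 < x := ha.trans_lt hx
  positivity

lemma integral_gammaDensity_Ioi (hm : 1 ≤ m) (hl : 0 < l) {a : ℝ} (ha : 0 ≤ a) :
    ∫ x in Ioi a, gammaDensity m l x = 1 - gammaCDF m l a := by
  rw [setIntegral_congr_fun measurableSet_Ioi fun x hx => gammaDensity_of_pos (ha.trans_lt hx)]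
  refine integral_Ioi_of_hasDerivAt_of_nonneg' (fun x _ => hasDerivAt_gammaCDF hm l x)
    (fun x hx => ?_) (tendsto_gammaCDF_atTop m hl)
  have : 0 < x := ha.trans_lt hx
  positivity

lemma integrable_gammaDensity (hm : 1 ≤ m) (hl : 0 < l) : Integrable (gammaDensity m l) :=
  (integrableOn_gammaDensity_Ioi hm hl le_rfl).integrable_of_forall_notMem_eq_zero
    fun _ hx => if_neg hx

lemma gammaLaw_apply (hm : 1 ≤ m) (hl : 0 < l) {s : Set ℝ} (hs : MeasurableSet s) :
    gammaLaw m l s = ENNReal.ofReal (∫ x in s, gammaDensity m l x) := by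
  rw [gammaLaw_eq_withDensity, withDensity_apply _ hs,
    ofReal_integral_eq_lintegral_ofReal (integrable_gammaDensity hm hl).integrableOn
      (ae_of_all _ (gammaDensity_nonneg hl.le))]

lemma isProbabilityMeasure_gammaLaw (hm : 1 ≤ m) (hl : 0 < l) :
    IsProbabilityMeasure (gammaLaw m l) where
  measure_univ := by
    rw [gammaLaw_apply hm hl MeasurableSet.univ, Measure.restrict_univ,
      ← setIntegral_eq_integral_of_forall_compl_eq_zero (s := Ioi 0) (f := gammaDensity m l)
        fun _ hx => if_neg hx,
      integral_gammaDensity_Ioi hm hl le_rfl, gammaCDF_zero hm, sub_zero, ENNReal.ofReal_one]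

lemma gammaLaw_Iio (hm : 1 ≤ m) (hl : 0 < l) {a : ℝ} (ha : 0 ≤ a) :
    gammaLaw m l (Iio a) = ENNReal.ofReal (gammaCDF m l a) := by
  have := isProbabilityMeasure_gammaLaw hm hl
  have hla : 0 ≤ l * a := by positivity
  rw [← compl_Ici, prob_compl_eq_one_sub measurableSet_Ici, gammaLaw_apply hm hl measurableSet_Ici,
    integral_Ici_eq_integral_Ioi, integral_gammaDensity_Ioi hm hl ha, ← ENNReal.ofReal_one,
    ← ENNReal.ofReal_sub _ (sub_nonneg.mpr (gammaCDF_le_one m hla)), sub_sub_cancel]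

lemma setLIntegral_gammaLaw_ofReal (hm : 1 ≤ m) (hl : 0 < l) {s : Set ℝ} (hs : MeasurableSet s)
    {f : ℝ → ℝ} (hf : Measurable f) (hf0 : ∀ x ∈ s, 0 ≤ f x) (hf1 : ∀ x ∈ s, f x ≤ 1) :
    ∫⁻ x in s, ENNReal.ofReal (f x) ∂gammaLaw m l =
      ENNReal.ofReal (∫ x in s, gammaDensity m l x * f x) := by
  have hbound : ∀ᵐ x ∂volume.restrict s, ‖f x‖ ≤ 1 :=
    (ae_restrict_iff' hs).mpr <| ae_of_all _ fun x hx => by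
      rw [Real.norm_of_nonneg (hf0 x hx)]; exact hf1 x hx
  rw [gammaLaw_eq_withDensity, restrict_withDensity hs,
    lintegral_withDensity_eq_lintegral_mul _ (by fun_prop) (by fun_prop),
    ofReal_integral_eq_lintegral_ofReal
      ((integrable_gammaDensity hm hl).integrableOn.mul_bdd hf.aestronglyMeasurable hbound)
      ((ae_restrict_iff' hs).mpr <| ae_of_all _ fun x hx =>
        mul_nonneg (gammaDensity_nonneg hl.le x) (hf0 x hx))]
  refine setLIntegral_congr_fun hs fun x _ => ?_
  rw [Pi.mul_apply, ENNReal.ofReal_mul (gammaDensity_nonneg hl.le x)]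

end GammaLaw

lemma ProbabilityTheory.IndepFun.measure_mem_and_lt_comp {Ω : Type*} [MeasurableSpace Ω]
    {P : Measure Ω} [IsFiniteMeasure P] {X Y : Ω → ℝ} (hX : Measurable X) (hY : Measurable Y)
    (hXY : IndepFun X Y P) {s : Set ℝ} (hs : MeasurableSet s) {g : ℝ → ℝ} (hg : Measurable g) :
    P {ω | X ω ∈ s ∧ Y ω < g (X ω)} = ∫⁻ x in s, P.map Y (Iio (g x)) ∂P.map X := by
  have hS : MeasurableSet {p : ℝ × ℝ | p.1 ∈ s ∧ p.2 < g p.1} :=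
    (measurable_fst hs).inter (measurableSet_lt measurable_snd (hg.comp measurable_fst))
  calc P {ω | X ω ∈ s ∧ Y ω < g (X ω)}
      = P.map (fun ω => (X ω, Y ω)) {p : ℝ × ℝ | p.1 ∈ s ∧ p.2 < g p.1} :=
        (Measure.map_apply (hX.prodMk hY) hS).symm
    _ = ((P.map X).prod (P.map Y)) {p : ℝ × ℝ | p.1 ∈ s ∧ p.2 < g p.1} := by
        rw [(indepFun_iff_map_prod_eq_prod_map_map hX.aemeasurable hY.aemeasurable).mp hXY]
    _ = ∫⁻ x, s.indicator (fun x => P.map Y (Iio (g x))) x ∂P.map X := by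
        rw [Measure.prod_apply hS]
        refine lintegral_congr fun x => ?_
        by_cases hx : x ∈ s
        · rw [indicator_of_mem hx]
          congr 1
          ext y
          simp [hx]
        · rw [indicator_of_notMem hx, ← measure_empty (μ := P.map Y)]
          congr 1
          ext y
          simp [hx]
    _ = _ := lintegral_indicator hs _

lemma ProbabilityTheory.IndepFun.toReal_measure_mem_and_lt_comp_of_gammaLaw {Ω : Type*}
    [MeasurableSpace Ω] {P : Measure Ω} [IsFiniteMeasure P] {X Y : Ω → ℝ} (hX : Measurable X)
    (hY : Measurable Y) (hXY : IndepFun X Y P) {m n : ℕ} (hm : 1 ≤ m) (hn : 1 ≤ n) {l l' : ℝ}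
    (hl : 0 < l) (hl' : 0 < l') (hXlaw : P.map X = gammaLaw m l) (hYlaw : P.map Y = gammaLaw n l')
    {s : Set ℝ} (hs : MeasurableSet s) {g : ℝ → ℝ} (hg : Measurable g) (hg0 : ∀ x ∈ s, 0 ≤ g x) :
    (P {ω | X ω ∈ s ∧ Y ω < g (X ω)}).toReal =
      ∫ x in s, gammaDensity m l x * gammaCDF n l' (g x) := by
  have hl'g : ∀ x ∈ s, 0 ≤ l' * g x := fun x hx => mul_nonneg hl'.le (hg0 x hx)
  rw [hXY.measure_mem_and_lt_comp hX hY hs hg, hXlaw, hYlaw,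
    setLIntegral_congr_fun hs fun x hx => gammaLaw_Iio hn hl' (hg0 x hx),
    setLIntegral_gammaLaw_ofReal hm hl hs (by fun_prop)
      (fun x hx => gammaCDF_nonneg n (hl'g x hx)) (fun x hx => gammaCDF_le_one n (hl'g x hx)),
    ENNReal.toReal_ofReal (setIntegral_nonneg hs fun x hx =>
      mul_nonneg (gammaDensity_nonneg hl.le x) (gammaCDF_nonneg n (hl'g x hx)))]

lemma setIntegral_mul_gammaCDF_comp {μ : Measure ℝ} {s : Set ℝ} (hs : MeasurableSet s)
    {d : ℝ → ℝ} (hd : IntegrableOn d s μ) (m : ℕ) {l : ℝ} {h : ℝ → ℝ} (hh : Measurable h)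
    (hlh : ∀ x ∈ s, 0 ≤ l * h x) :
    ∫ x in s, d x * gammaCDF m l (h x) ∂μ =
      ∫ x in s, d x ∂μ - ∑ i ∈ Finset.range m, ∫ x in s, d x * poissonTerm (l * h x) i ∂μ := by
  have hterm (i : ℕ) : IntegrableOn (fun x => d x * poissonTerm (l * h x) i) s μ := by
    refine hd.mul_bdd (c := 1) (by unfold poissonTerm; fun_prop)
      ((ae_restrict_iff' hs).mpr <| ae_of_all _ fun x hx => ?_)
    rw [Real.norm_of_nonneg (poissonTerm_nonneg (hlh x hx) i)]
    exact poissonTerm_le_one (hlh x hx) i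
  simp only [gammaCDF_eq_one_sub_sum_poissonTerm, mul_sub, mul_one, Finset.mul_sum]
  rw [integral_sub hd (integrable_finsetSum _ fun i _ => hterm i),
    integral_finsetSum _ fun i _ => hterm i]

lemma gammaDensity_mul_poissonTerm {m : ℕ} (hm : 1 ≤ m) (l l' : ℝ) {a b y : ℝ} (hy : a < y)
    (hy0 : 0 < y) (i : ℕ) :
    gammaDensity m l y * poissonTerm (l' * (b * y / (y - a))) i =
      l ^ m / Real.Gamma m * ((l' * b) ^ i / (Nat.factorial i : ℝ) *
        (y ^ (m + i - 1) / (y - a) ^ i * Real.exp (-(l * y) - l' * b * y / (y - a)))) := by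
  have hya : y - a ≠ 0 := (sub_pos.mpr hy).ne'
  have hexp : Real.exp (-(l * y) - l' * b * y / (y - a)) =
      Real.exp (-(l * y)) * Real.exp (-(l' * (b * y / (y - a)))) := by
    rw [← Real.exp_add]
    ring_nf
  rw [gammaDensity_of_pos hy0, poissonTerm, show m + i - 1 = (m - 1) + i by omega, hexp, pow_add,
    mul_pow l', div_pow]
  field_simp
  ring

/-- Let m ≥ 1 be an integer, λ_B, λ_F > 0, and let G_B, G_F be independent Gamma
random variables with shape m and rates λ_B, λ_F respectively, with CDF F_B of G_B. Let ε3 > 0,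
ε4 > 0 and ε5 = ε3 + ε4. Then
P(G_B > ε5 and G_F < ε4·G_B/(G_B − ε3))
  = 1 − F_B(ε5) − (λ_B^m/Γ(m)) Σ_{i=0}^{m−1} ((λ_F ε4)^i/i!)
      ∫_{ε5}^{∞} y^{m+i−1}/(y − ε3)^i · e^{−λ_B y − λ_F ε4 y/(y − ε3)} dy. -/
theorem stmt_12 {Ω : Type*} [MeasurableSpace Ω] (P : Measure Ω) [IsProbabilityMeasure P]
    (m : ℕ) (hm : 1 ≤ m) (lB lF : ℝ) (hlB : 0 < lB) (hlF : 0 < lF)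
    (GB GF : Ω → ℝ) (hGB : Measurable GB) (hGF : Measurable GF)
    (hBlaw : P.map GB = gammaLaw m lB) (hFlaw : P.map GF = gammaLaw m lF)
    (hindep : IndepFun GB GF P)
    (ε3 ε4 : ℝ) (hε3 : 0 < ε3) (hε4 : 0 < ε4) :
    (P {ω | ε3 + ε4 < GB ω ∧ GF ω < ε4 * GB ω / (GB ω - ε3)}).toReal =
      1 - gammaCDF m lB (ε3 + ε4) -
        lB ^ m / Real.Gamma m *
          ∑ i ∈ Finset.range m,
            (lF * ε4) ^ i / (Nat.factorial i : ℝ) *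
              ∫ y in Set.Ioi (ε3 + ε4),
                y ^ (m + i - 1) / (y - ε3) ^ i *
                  Real.exp (-(lB * y) - lF * ε4 * y / (y - ε3)) := by
  have hε5 : 0 ≤ ε3 + ε4 := by positivity
  have hy : ∀ y ∈ Ioi (ε3 + ε4), 0 < y ∧ ε3 < y ∧ 0 ≤ ε4 * y / (y - ε3) := by
    intro y (hy : _ < y)
    have hy0 : 0 < y := by linarith
    have hy3 : 0 < y - ε3 := by linarith
    exact ⟨hy0, by linarith, by positivity⟩
  rw [show {ω | ε3 + ε4 < GB ω ∧ GF ω < ε4 * GB ω / (GB ω - ε3)} =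
      {ω | GB ω ∈ Ioi (ε3 + ε4) ∧ GF ω < ε4 * GB ω / (GB ω - ε3)} from rfl,
    hindep.toReal_measure_mem_and_lt_comp_of_gammaLaw hGB hGF hm hm hlB hlF hBlaw hFlaw
      measurableSet_Ioi (by fun_prop) fun y hy' => (hy y hy').2.2,
    setIntegral_mul_gammaCDF_comp measurableSet_Ioi (integrableOn_gammaDensity_Ioi hm hlB hε5) m
      (by fun_prop) fun y hy' => mul_nonneg hlF.le (hy y hy').2.2,
    integral_gammaDensity_Ioi hm hlB hε5, Finset.mul_sum]
  congr 1
  refine Finset.sum_congr rfl fun i _ => ?_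
  rw [setIntegral_congr_fun measurableSet_Ioi fun y hy' =>
      gammaDensity_mul_poissonTerm hm lB lF (hy y hy').2.1 (hy y hy').1 i,
    integral_const_mul, integral_const_mul]
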